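/- The function u ↦ log det(V + diag(e^{-u})) is convex on ℝ^p, where V is any positive semidefinite p×p matrix. -/

import Mathlib

/-!
Expanding the determinant multilinearly in the rows gives
`det (V + diag d) = ∑_S (∏_{i ∉ S} d i) * det V[S, S]`. For `d i = exp (-u i)` this writes the
determinant as a sum of exponentials of linear functions of `u` whose coefficients, the principal
minors of `V`, are nonnegative, with the empty minor equal to `1`. The logarithm of such a sum is
convex by Hölder's inequality.
-/

open Matrix Finset Real

namespace Matrix

variable {n R : Type*} [Fintype n] [DecidableEq n] [CommRing R]

theorem det_add_diagonal (A : Matrix n n R) (d : n → R) :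
    (A + diagonal d).det =
      ∑ s : Finset n, (∏ i ∈ sᶜ, d i) * (A.submatrix ((↑) : s → n) (↑)).det := by
  let D := (detRowAlternating : (n → R) [⋀^n]→ₗ[R] R).toMultilinearMap
  have hrows (s : Finset n) : s.piecewise A.row (diagonal d).row =
      sᶜ.piecewise (fun i => d i • s.piecewise A.row (1 : Matrix n n R).row i)
        (s.piecewise A.row (1 : Matrix n n R).row) := by
    ext i j
    by_cases hi : i ∈ s <;> simp [hi, Finset.piecewise, diagonal_apply, one_apply]
  change D (A.row + (diagonal d).row) = _
  rw [D.map_add_univ]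
  refine sum_congr rfl fun s _ => ?_
  rw [hrows, D.map_piecewise_smul, smul_eq_mul, ← det_piecewise_one_eq_submatrix_det]
  rfl

end Matrix

theorem Real.sum_rpow_mul_rpow_le {ι : Type*} (s : Finset ι) {f g : ι → ℝ}
    (hf : ∀ i ∈ s, 0 ≤ f i) (hg : ∀ i ∈ s, 0 ≤ g i) {a b : ℝ} (ha : 0 < a) (hb : 0 < b)
    (hab : a + b = 1) :
    ∑ i ∈ s, f i ^ a * g i ^ b ≤ (∑ i ∈ s, f i) ^ a * (∑ i ∈ s, g i) ^ b := by
  have hpow {c : ℝ} (t : ℝ) (ht : 0 < t) (hc : 0 ≤ c) : (c ^ t) ^ (1 / t) = c := by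
    rw [← rpow_mul hc, mul_one_div_cancel ht.ne', rpow_one]
  have holder := inner_le_Lp_mul_Lq_of_nonneg s (holderConjugate_one_div ha hb hab)
    (fun i hi => rpow_nonneg (hf i hi) a) (fun i hi => rpow_nonneg (hg i hi) b)
  rwa [sum_congr rfl fun i hi => hpow a ha (hf i hi),
    sum_congr rfl fun i hi => hpow b hb (hg i hi), one_div_one_div, one_div_one_div] at holder

section LogConvex

variable {E : Type*} [AddCommGroup E] [Module ℝ E] {s : Set E}

theorem ConvexOn.log_of_le_rpow_mul_rpow {F : E → ℝ} (hs : Convex ℝ s) (hF : ∀ x ∈ s, 0 < F x)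
    (hmul : ∀ ⦃x⦄, x ∈ s → ∀ ⦃y⦄, y ∈ s → ∀ ⦃a b : ℝ⦄, 0 < a → 0 < b → a + b = 1 →
      F (a • x + b • y) ≤ F x ^ a * F y ^ b) :
    ConvexOn ℝ s fun x => log (F x) := by
  refine convexOn_iff_forall_pos.2 ⟨hs, fun x hx y hy a b ha hb hab => ?_⟩
  calc log (F (a • x + b • y))
      ≤ log (F x ^ a * F y ^ b) :=
        log_le_log (hF _ (hs hx hy ha.le hb.le hab)) (hmul hx hy ha hb hab)
    _ = a • log (F x) + b • log (F y) := by
      rw [log_mul (rpow_pos_of_pos (hF x hx) a).ne' (rpow_pos_of_pos (hF y hy) b).ne',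
        log_rpow (hF x hx), log_rpow (hF y hy), smul_eq_mul, smul_eq_mul]

theorem ConvexOn.log_sum_mul_exp {ι : Type*} [Fintype ι] (hs : Convex ℝ s) {c : ι → ℝ}
    (hc : ∀ k, 0 ≤ c k) {k₀ : ι} (hk₀ : 0 < c k₀) {g : ι → E → ℝ}
    (hg : ∀ k, ConvexOn ℝ s (g k)) :
    ConvexOn ℝ s fun x => log (∑ k, c k * exp (g k x)) := by
  have hterm (x : E) (k : ι) : 0 ≤ c k * exp (g k x) := by have := hc k; positivity
  refine .log_of_le_rpow_mul_rpow hs (fun x _ => ?_) fun x hx y hy a b ha hb hab => ?_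
  · exact (mul_pos hk₀ (exp_pos _)).trans_le
      (single_le_sum (fun k _ => hterm x k) (mem_univ k₀))
  calc ∑ k, c k * exp (g k (a • x + b • y))
      ≤ ∑ k, (c k * exp (g k x)) ^ a * (c k * exp (g k y)) ^ b := by
        refine sum_le_sum fun k _ => ?_
        have hck := hc k
        have hsplit : (c k * exp (g k x)) ^ a * (c k * exp (g k y)) ^ b
            = c k * exp (a * g k x + b * g k y) := by
          rw [mul_rpow hck (exp_pos _).le, mul_rpow hck (exp_pos _).le, ← exp_mul, ← exp_mul,
            exp_add, mul_mul_mul_comm, ← rpow_add' hck (by rw [hab]; norm_num), hab, rpow_one,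
            mul_comm (g k x), mul_comm (g k y)]
        rw [hsplit]
        gcongr
        exact (hg k).2 hx hy ha.le hb.le hab
    _ ≤ _ := sum_rpow_mul_rpow_le _ (fun k _ => hterm x k) (fun k _ => hterm y k) ha hb hab

end LogConvex

theorem logdet_convex' {p : ℕ} (V : Matrix (Fin p) (Fin p) ℝ) (hV : V.PosSemidef) :
    ConvexOn ℝ Set.univ (fun u : Fin p → ℝ =>
      Real.log (Matrix.det (V + Matrix.diagonal (fun i => Real.exp (-u i))))) := by
  have hexpand (u : Fin p → ℝ) : (V + diagonal fun i => exp (-u i)).det =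
      ∑ s : Finset (Fin p), (V.submatrix ((↑) : s → Fin p) (↑)).det * exp (∑ i ∈ sᶜ, -u i) := by
    simp only [det_add_diagonal, exp_sum, mul_comm]
  simp only [hexpand]
  refine ConvexOn.log_sum_mul_exp convex_univ (fun s => (hV.submatrix _).det_nonneg)
    (k₀ := ∅) (by simp) fun s => ?_
  exact ((-∑ i ∈ sᶜ, LinearMap.proj i : (Fin p → ℝ) →ₗ[ℝ] ℝ).convexOn convex_univ).congr
    fun u _ => by simp
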